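/- arXiv:1809.05607 — 3 statements merged into one kernel-verified Lean document; each statement's English description precedes it below -/
import Mathlib

section
/- For any complex-valued function g in L²(a,b) with a < b real, the real part of the inner product (J⁺g, g) equals (1/2)|∫ₐᵇ g(x) dx|², where (J⁺g)(x) = ∫ₐˣ g(t) dt and the inner product is (f,g) = ∫ₐᵇ conj(f(x)) g(x) dx. In particular, Re(J⁺g, g) ≥ 0. -/
/-!
Write `L = ∫ x, conj (∫ t < x, g t) * g x`. By Fubini, `L` is the integral of `g x * conj (g t)`
over the triangle `t < x`; swapping the variables turns `conj L` into the integral over the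
opposite triangle, and the diagonal is null, so
`2 Re L = L + conj L = ∫∫ g x * conj (g t) = |∫ g|²`.
-/

open MeasureTheory Set ComplexConjugate

variable {α 𝕜 : Type*} [MeasurableSpace α] [RCLike 𝕜] {μ : Measure α} {g : α → 𝕜}

theorem MeasureTheory.Integrable.mul_conj_prod (hg : Integrable g μ) :
    Integrable (fun p : α × α => g p.1 * conj (g p.2)) (μ.prod μ) :=
  hg.mul_prod (RCLike.conjCLE.toContinuousLinearMap.integrable_comp hg)

variable [SFinite μ] [LinearOrder α]

theorem conj_setIntegral_snd_lt_mul_conj :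
    conj (∫ p in {p : α × α | p.2 < p.1}, g p.1 * conj (g p.2) ∂μ.prod μ)
      = ∫ p in {p : α × α | p.1 < p.2}, g p.1 * conj (g p.2) ∂μ.prod μ := by
  rw [← integral_conj, ← Measure.measurePreserving_swap.setIntegral_preimage_emb
    MeasurableEquiv.prodComm.measurableEmbedding]
  simp [mul_comm]

variable [TopologicalSpace α] [OrderClosedTopology α] [SecondCountableTopology α]
  [OpensMeasurableSpace α]

theorem ae_fst_ne_snd [NullSingletonClass μ] : ∀ᵐ p ∂μ.prod μ, p.1 ≠ p.2 :=
  (Measure.ae_prod_iff_ae_ae (measurableSet_eq_fun measurable_fst measurable_snd).compl).2 <|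
    .of_forall fun x => (μ.ae_ne x).mono fun _ h => h.symm

theorem compl_setOf_snd_lt_ae_eq [NullSingletonClass μ] :
    ({p : α × α | p.2 < p.1}ᶜ : Set (α × α)) =ᵐ[μ.prod μ] {p | p.1 < p.2} := by
  filter_upwards [ae_fst_ne_snd] with p hp
  simp only [compl_ofPred, not_lt, eq_iff_iff]
  exact ⟨fun h => lt_of_le_of_ne h hp, le_of_lt⟩

theorem integral_conj_setIntegral_Iio_mul (hg : Integrable g μ) :
    ∫ x, conj (∫ t in Iio x, g t ∂μ) * g x ∂μ
      = ∫ p in {p : α × α | p.2 < p.1}, g p.1 * conj (g p.2) ∂μ.prod μ := by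
  have hS : MeasurableSet {p : α × α | p.2 < p.1} :=
    measurableSet_lt measurable_snd measurable_fst
  rw [← integral_indicator hS, integral_prod _ (hg.mul_conj_prod.indicator hS)]
  refine integral_congr_ae (.of_forall fun x => ?_)
  have hslice : ∀ t, {p : α × α | p.2 < p.1}.indicator (fun p => g p.1 * conj (g p.2)) (x, t)
      = (Iio x).indicator (fun t => g x * conj (g t)) t := fun t => rfl
  simp only [hslice, integral_indicator measurableSet_Iio, integral_const_mul, integral_conj, mul_comm]

theorem two_mul_re_integral_conj_integral_Iio_mul [NullSingletonClass μ] (hg : Integrable g μ) :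
    2 * RCLike.re (∫ x, conj (∫ t in Iio x, g t ∂μ) * g x ∂μ) = ‖∫ x, g x ∂μ‖ ^ 2 := by
  set S := {p : α × α | p.2 < p.1}
  set K := fun p : α × α => g p.1 * conj (g p.2)
  apply RCLike.ofReal_injective (K := 𝕜)
  push_cast
  calc 2 * RCLike.re (∫ x, conj (∫ t in Iio x, g t ∂μ) * g x ∂μ)
      = (∫ p in S, K p ∂μ.prod μ) + conj (∫ p in S, K p ∂μ.prod μ) := by
        rw [RCLike.add_conj, integral_conj_setIntegral_Iio_mul hg]
    _ = (∫ p in S, K p ∂μ.prod μ) + ∫ p in Sᶜ, K p ∂μ.prod μ := by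
        rw [conj_setIntegral_snd_lt_mul_conj, setIntegral_congr_set compl_setOf_snd_lt_ae_eq]
    _ = ∫ p, K p ∂μ.prod μ :=
        integral_add_compl (measurableSet_lt measurable_snd measurable_fst) hg.mul_conj_prod
    _ = (∫ x, g x ∂μ) * conj (∫ x, g x ∂μ) := by
        rw [← integral_conj]; exact integral_prod_mul g (conj ∘ g)
    _ = ‖∫ x, g x ∂μ‖ ^ 2 := RCLike.mul_conj _

theorem intervalIntegral_eq_setIntegral_Iio_restrict_Ioo {E : Type*} [NormedAddCommGroup E]
    [NormedSpace ℝ E] {μ : Measure ℝ} [NullSingletonClass μ] {f : ℝ → E} {a b x : ℝ}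
    (hax : a ≤ x) (hxb : x ≤ b) :
    ∫ t in a..x, f t ∂μ = ∫ t in Iio x, f t ∂μ.restrict (Ioo a b) := by
  rw [Measure.restrict_restrict measurableSet_Iio, Iio_inter_Ioo, min_eq_left hxb,
    intervalIntegral.integral_of_le hax, integral_Ioc_eq_integral_Ioo]

theorem stmt_0_general (a b : ℝ) (g : ℝ → ℂ)
    (hg : MemLp g 2 (volume.restrict (Ioo a b))) :
    (∫ x in Ioo a b, (starRingEnd ℂ) (∫ t in a..x, g t) * g x).re
      = (1 / 2) * ‖∫ x in Ioo a b, g x‖ ^ 2 ∧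
    0 ≤ (∫ x in Ioo a b, (starRingEnd ℂ) (∫ t in a..x, g t) * g x).re := by
  have hL : ∫ x in Ioo a b, conj (∫ t in a..x, g t) * g x
      = ∫ x in Ioo a b, conj (∫ t in Iio x, g t ∂volume.restrict (Ioo a b)) * g x :=
    setIntegral_congr_fun measurableSet_Ioo fun x hx => by
      rw [intervalIntegral_eq_setIntegral_Iio_restrict_Ioo hx.1.le hx.2.le]
  have h := two_mul_re_integral_conj_integral_Iio_mul (hg.integrable one_le_two)
  rw [RCLike.re_to_complex] at h
  rw [hL]
  exact ⟨by linarith, by linarith [sq_nonneg ‖∫ x in Ioo a b, g x‖]⟩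

theorem stmt_0 (a b : ℝ) (hab : a < b) (g : ℝ → ℂ)
    (hg : MemLp g 2 (volume.restrict (Ioo a b))) :
    (∫ x in Ioo a b, (starRingEnd ℂ) (∫ t in a..x, g t) * g x).re
      = (1 / 2) * ‖∫ x in Ioo a b, g x‖ ^ 2 ∧
    0 ≤ (∫ x in Ioo a b, (starRingEnd ℂ) (∫ t in a..x, g t) * g x).re :=
  stmt_0_general a b g hg
end

section
/- Let f : ℝ → ℂ be integrable on (0,∞) and let F(x) = ∫₀^∞ e^{ixy} f(y) dy be its Fourier transform. If f is real-valued and F is differentiable on [0,∞) with |F(x)| → 0 as x → ∞, then the imaginary part of ∫₀^∞ conj(i·F′(x)) · F(x) dx equals (1/2)(∫₀^∞ f(y) dy)². -/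
/-!
Since `Im (conj (i F') F) = -⟪F, F'⟫_ℝ = -(1/2) (‖F‖²)'`, the integral is `(1/2) ‖F 0‖²` by the
fundamental theorem of calculus on `[0, ∞)` (using `‖F‖ → 0`), and `F 0 = ∫₀^∞ f` is real.
-/

open MeasureTheory Set Filter Topology ComplexConjugate

theorem integral_Ioi_inner_self_deriv {E : Type*} [NormedAddCommGroup E] [InnerProductSpace ℝ E]
    {F F' : ℝ → E} {a : ℝ} (hderiv : ∀ x ∈ Ici a, HasDerivAt F (F' x) x)
    (hint : IntegrableOn (fun x => inner ℝ (F x) (F' x)) (Ioi a))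
    (hlim : Tendsto (fun x => ‖F x‖) atTop (𝓝 0)) :
    ∫ x in Ioi a, inner ℝ (F x) (F' x) = -‖F a‖ ^ 2 / 2 := by
  have hFTC := integral_Ioi_of_hasDerivAt_of_tendsto' (fun x hx => (hderiv x hx).norm_sq)
    (hint.const_mul 2) (by simpa using hlim.pow 2)
  rw [integral_const_mul] at hFTC
  linarith

theorem Complex.im_conj_I_mul_mul (w z : ℂ) : (conj (I * w) * z).im = -inner ℝ z w := by
  simp only [Complex.inner, map_mul, Complex.conj_I, Complex.mul_im, Complex.mul_re,
    Complex.neg_re, Complex.neg_im, Complex.I_re, Complex.I_im, Complex.conj_re, Complex.conj_im]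
  ring

theorem stmt_4_general (f : ℝ → ℝ)
    (F F' : ℝ → ℂ)
    (hF : ∀ x, F x = ∫ y in Ioi (0:ℝ), Complex.exp (Complex.I * x * y) * (f y : ℂ))
    (hF' : ∀ x ≥ (0:ℝ), HasDerivAt F (F' x) x)
    (hlim : Tendsto (fun x => ‖F x‖) atTop (nhds 0))
    (hint : IntegrableOn (fun x => (starRingEnd ℂ) (Complex.I * F' x) * F x) (Ioi 0)) :
    (∫ x in Ioi (0:ℝ), (starRingEnd ℂ) (Complex.I * F' x) * F x).im
      = (1 / 2) * (∫ y in Ioi (0:ℝ), f y) ^ 2 := by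
  have hinner : Integrable (fun x => inner ℝ (F x) (F' x)) (volume.restrict (Ioi 0)) := by
    simpa only [RCLike.im_to_complex, Pi.neg_def, Complex.im_conj_I_mul_mul, neg_neg]
      using hint.integrable.im.neg
  have hF0 : F 0 = ((∫ y in Ioi (0:ℝ), f y : ℝ) : ℂ) := by
    rw [hF 0]
    simp only [Complex.ofReal_zero, mul_zero, zero_mul, Complex.exp_zero, one_mul]
    exact integral_ofReal
  calc (∫ x in Ioi (0:ℝ), conj (Complex.I * F' x) * F x).im
      = ∫ x in Ioi (0:ℝ), (conj (Complex.I * F' x) * F x).im := (integral_im hint).symm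
    _ = ∫ x in Ioi (0:ℝ), -inner ℝ (F x) (F' x) := by simp only [Complex.im_conj_I_mul_mul]
    _ = ‖F 0‖ ^ 2 / 2 := by
        rw [integral_neg, integral_Ioi_inner_self_deriv hF' hinner hlim]
        ring
    _ = (1 / 2) * (∫ y in Ioi (0:ℝ), f y) ^ 2 := by
        rw [hF0, Complex.norm_real, Real.norm_eq_abs, sq_abs]
        ring

theorem stmt_4 (f : ℝ → ℝ) (hf : IntegrableOn f (Ioi 0))
    (F F' : ℝ → ℂ)
    (hF : ∀ x, F x = ∫ y in Ioi (0:ℝ), Complex.exp (Complex.I * x * y) * (f y : ℂ))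
    (hF' : ∀ x ≥ (0:ℝ), HasDerivAt F (F' x) x)
    (hlim : Tendsto (fun x => ‖F x‖) atTop (nhds 0))
    (hint : IntegrableOn (fun x => (starRingEnd ℂ) (Complex.I * F' x) * F x) (Ioi 0)) :
    (∫ x in Ioi (0:ℝ), (starRingEnd ℂ) (Complex.I * F' x) * F x).im
      = (1 / 2) * (∫ y in Ioi (0:ℝ), f y) ^ 2 :=
  stmt_4_general f F F' hF hF' hlim hint
end

section
/- If k(x) = −e^{−x} for x > −1 and k(x) = 0 for x ≤ −1, and g(t) = 2e^{−1/2}·t·e^{t²−t}, then the function f(t) = g(t) − sinh(1/2)·e^{−t} solves the integral equation f(x) − ∫₀¹ k(x−t) f(t) dt = g(x) for all x ∈ (0,1). -/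
/-!
For `0 < x` and `t ≤ 1` the kernel factors as `k (x - t) = -e^{-x} e^t`, so the integral term
is `-e^{-x} ∫₀¹ e^t f(t) dt`. Since `e^t f(t) = e^{-1/2} · 2t e^{t²} - sinh(1/2)`, that integral is
`e^{-1/2}(e - 1) - sinh(1/2) = sinh(1/2)`, and the integral term cancels the `-sinh(1/2) e^{-x}`
in `f`.
-/

open Set Real intervalIntegral

theorem integral_two_mul_mul_exp_sq (a b : ℝ) :
    ∫ t in a..b, 2 * t * exp (t ^ 2) = exp (b ^ 2) - exp (a ^ 2) := by
  refine integral_eq_sub_of_hasDerivAt (f := fun t => exp (t ^ 2)) (fun t _ => ?_) ?_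
  · simpa [mul_comm] using (hasDerivAt_pow 2 t).exp
  · exact Continuous.intervalIntegrable (by fun_prop) a b

theorem exp_neg_half_mul_exp_one_sub_one : exp (-(1 / 2)) * (exp 1 - 1) = 2 * sinh (1 / 2) := by
  rw [sinh_eq, mul_sub, ← exp_add, mul_one, show -(1 / 2 : ℝ) + 1 = 1 / 2 by norm_num]
  ring

theorem kernel_apply_sub {k : ℝ → ℝ} (hk : ∀ u, k u = if -1 < u then -exp (-u) else 0)
    {x t : ℝ} (hx : 0 < x) (ht : t ≤ 1) : k (x - t) = -exp (-x) * exp t := by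
  rw [hk, if_pos (by linarith), neg_mul, ← exp_add]
  ring_nf

theorem integral_exp_mul_solution {g f : ℝ → ℝ}
    (hg : ∀ t, g t = 2 * exp (-(1 / 2)) * t * exp (t ^ 2 - t))
    (hf : ∀ t, f t = g t - sinh (1 / 2) * exp (-t)) :
    ∫ t in (0 : ℝ)..1, exp t * f t = sinh (1 / 2) := by
  have hfg : ∀ t, exp t * f t = exp (-(1 / 2)) * (2 * t * exp (t ^ 2)) - sinh (1 / 2) := by
    intro t
    have h1 : exp t * exp (-t) = 1 := by rw [← exp_add, add_neg_cancel, exp_zero]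
    have h2 : exp (t ^ 2 - t) * exp t = exp (t ^ 2) := by rw [← exp_add, sub_add_cancel]
    rw [hf, hg]
    linear_combination (2 * exp (-(1 / 2)) * t) * h2 - sinh (1 / 2) * h1
  simp_rw [hfg]
  rw [integral_sub (Continuous.intervalIntegrable (by fun_prop) _ _) intervalIntegrable_const,
    integral_const_mul, integral_two_mul_mul_exp_sq, integral_const]
  rw [one_pow, zero_pow two_ne_zero, exp_zero, sub_zero, one_smul,
    exp_neg_half_mul_exp_one_sub_one]
  ring

theorem stmt_13 (k : ℝ → ℝ) (hk : ∀ u, k u = if -1 < u then -Real.exp (-u) else 0)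
    (g f : ℝ → ℝ)
    (hg : ∀ t, g t = 2 * Real.exp (-(1/2)) * t * Real.exp (t ^ 2 - t))
    (hf : ∀ t, f t = g t - Real.sinh (1/2) * Real.exp (-t)) :
    ∀ x ∈ Ioo (0:ℝ) 1, f x - ∫ t in (0:ℝ)..1, k (x - t) * f t = g x := by
  rintro x ⟨hx, -⟩
  have hkernel : ∫ t in (0 : ℝ)..1, k (x - t) * f t
      = -exp (-x) * ∫ t in (0 : ℝ)..1, exp t * f t := by
    rw [← integral_const_mul]
    refine integral_congr fun t ht => ?_
    rw [uIcc_of_le zero_le_one] at ht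
    simp only [kernel_apply_sub hk hx ht.2, mul_assoc]
  rw [hkernel, integral_exp_mul_solution hg hf, hf]
  ring
end
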